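/- Let ψ₁ ∈ L²(ℝ) satisfy the discrete Calderón condition Σ_{j∈ℤ} |ψ̂₁(2^{−j}ξ)|² = 1 for a.e. ξ ∈ ℝ with supp ψ̂₁ ⊆ [−5/4,−1/4] ∪ [1/4,5/4], and let ψ₂ ∈ L²(ℝ) satisfy Σ_{k=−1}^{1} |ψ̂₂(ξ+k)|² = 1 for a.e. ξ ∈ [−1,1] with supp ψ̂₂ ⊆ [−1,1]. Define the classical band-limited shearlet ψ ∈ L²(ℝ²) by ψ̂(ξ₁,ξ₂) = ψ̂₁(ξ₁)·ψ̂₂(ξ₂/ξ₁) for ξ₁ ≠ 0 and ψ̂(0,ξ₂) = 0. Then for a.e. ξ = (ξ₁,ξ₂) ∈ ℝ² with |ξ₁| ≥ 1 and |ξ₂/ξ₁| < 1, one has the tiling identity Σ_{j≥0} Σ_{|k|≤⌈2^{j/2}⌉} |ψ̂(S_kᵀ A_{2^{−j}} ξ)|² = 1, where S_kᵀ A_{2^{−j}} ξ = (2^{−j}ξ₁, k·2^{−j}ξ₁ + 2^{−j/2}ξ₂), i.e., Σ_{j≥0} Σ_{|k|≤⌈2^{j/2}⌉} |ψ̂₁(2^{−j}ξ₁)|²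 |ψ̂₂(2^{j/2}ξ₂/ξ₁ + k)|² = 1. -/

import Mathlib

/- STATEMENT 3: For the classical band-limited shearlet generated by a discrete wavelet ψ₁
and a bump function ψ₂, for a.e. ξ in the interior of the horizontal cone one has the tiling
identity Σ_{j≥0} Σ_{|k|≤⌈2^{j/2}⌉} |ψ̂(S_kᵀ A_{2^{−j}} ξ)|² = 1. -/

open MeasureTheory

lemma aff_null {a : ℝ} (ha : a ≠ 0) (b : ℝ) {N : Set ℝ} (hN : volume N = 0) :
    volume ((fun t : ℝ => a * t + b) ⁻¹' N) = 0 := by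
  have h1 : Measure.QuasiMeasurePreserving (fun t : ℝ => a * t + b) volume volume := by
    have h2 := (measurePreserving_add_right (volume : Measure ℝ) b).quasiMeasurePreserving.comp
      (Measure.quasiMeasurePreserving_smul (volume : Measure ℝ) ha)
    simpa [Function.comp_def, smul_eq_mul] using h2
  exact h1.preimage_null hN

lemma cone_null {N : Set ℝ} (hN : volume N = 0) :
    volume {ξ : ℝ × ℝ | ξ.1 ≠ 0 ∧ ξ.2 / ξ.1 ∈ N} = 0 := by
  obtain ⟨N', hsub, hmeas, hN'⟩ := exists_measurable_superset_of_null hN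
  refine measure_mono_null (t := {ξ : ℝ × ℝ | ξ.1 ≠ 0 ∧ ξ.2 / ξ.1 ∈ N'})
    (fun ξ hξ => ⟨hξ.1, hsub hξ.2⟩) ?_
  have hms : MeasurableSet {ξ : ℝ × ℝ | ξ.1 ≠ 0 ∧ ξ.2 / ξ.1 ∈ N'} := by
    refine MeasurableSet.inter ?_ ((measurable_snd.div measurable_fst) hmeas)
    exact (measurable_fst (measurableSet_singleton (0:ℝ))).compl
  rw [Measure.volume_eq_prod, Measure.measure_prod_null hms]
  have h0 : ∀ᵐ x : ℝ ∂volume, x ≠ 0 := by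
    refine (ae_iff).mpr ?_
    simp [Real.volume_singleton]
  filter_upwards [h0] with x hx
  have : (Prod.mk x ⁻¹' {ξ : ℝ × ℝ | ξ.1 ≠ 0 ∧ ξ.2 / ξ.1 ∈ N'})
      = (fun y : ℝ => x⁻¹ * y) ⁻¹' N' := by
    ext y; simp [Set.mem_preimage, hx, div_eq_inv_mul]
  simp only [Pi.zero_apply, this]
  have := Measure.quasiMeasurePreserving_smul (volume : Measure ℝ) (inv_ne_zero hx)
  simpa [smul_eq_mul] using this.preimage_null hN'

lemma fst_null {N : Set ℝ} (hN : volume N = 0) :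
    volume {ξ : ℝ × ℝ | ξ.1 ∈ N} = 0 := by
  obtain ⟨N', hsub, hmeas, hN'⟩ := exists_measurable_superset_of_null hN
  refine measure_mono_null (t := N' ×ˢ (Set.univ : Set ℝ))
    (fun ξ hξ => ⟨hsub hξ, trivial⟩) ?_
  rw [Measure.volume_eq_prod, Measure.prod_prod, hN', zero_mul]


/-- The 1D Fourier transform `f̂(ξ) = ∫ f(x) e^{−2πixξ} dx`. -/
noncomputable def fourier1 (f : ℝ → ℂ) (ξ : ℝ) : ℂ :=
  ∫ x : ℝ, Complex.exp ((-2 * Real.pi * (x * ξ) : ℝ) * Complex.I) * f x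

/-- The 2D Fourier transform `f̂(ξ) = ∫ f(x) e^{−2πi⟨x,ξ⟩} dx`. -/
noncomputable def fourier2 (f : ℝ × ℝ → ℂ) (ξ : ℝ × ℝ) : ℂ :=
  ∫ x : ℝ × ℝ,
    Complex.exp ((-2 * Real.pi * (x.1 * ξ.1 + x.2 * ξ.2) : ℝ) * Complex.I) * f x

theorem classical_shearlet_tiling
    (ψ₁ ψ₂ : ℝ → ℂ)
    (hψ₁L2 : MemLp ψ₁ 2 volume) (hψ₂L2 : MemLp ψ₂ 2 volume)
    -- discrete Calderón condition: Σ_{j∈ℤ} |ψ̂₁(2^{−j}ξ)|² = 1 for a.e. ξ ∈ ℝ :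
    (hCald : ∀ᵐ ξ : ℝ ∂volume,
      ∑' j : ℤ, ‖fourier1 ψ₁ ((2:ℝ) ^ (-j) * ξ)‖ ^ 2 = 1)
    (hψ₁supp : Function.support (fourier1 ψ₁) ⊆
      Set.Icc (-(5/4) : ℝ) (-(1/4)) ∪ Set.Icc (1/4 : ℝ) (5/4))
    -- bump condition: Σ_{k=−1}^{1} |ψ̂₂(ξ+k)|² = 1 for a.e. ξ ∈ [−1,1] :
    (hbump : ∀ᵐ ξ : ℝ ∂(volume.restrict (Set.Icc (-1 : ℝ) 1)),
      ∑ k ∈ Finset.Icc (-1 : ℤ) 1, ‖fourier1 ψ₂ (ξ + (k : ℝ))‖ ^ 2 = 1)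
    (hψ₂supp : Function.support (fourier1 ψ₂) ⊆ Set.Icc (-1 : ℝ) 1)
    (ψ : ℝ × ℝ → ℂ) (hψL2 : MemLp ψ 2 volume)
    -- ψ̂(ξ₁,ξ₂) = ψ̂₁(ξ₁)·ψ̂₂(ξ₂/ξ₁) for ξ₁ ≠ 0, and ψ̂(0,ξ₂) = 0 :
    (hψdef : ∀ ξ : ℝ × ℝ, fourier2 ψ ξ =
      if ξ.1 = 0 then 0 else fourier1 ψ₁ ξ.1 * fourier1 ψ₂ (ξ.2 / ξ.1)) :
    -- for a.e. ξ with |ξ₁| ≥ 1 and |ξ₂/ξ₁| < 1 :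
    ∀ᵐ ξ : ℝ × ℝ ∂volume, (1 ≤ |ξ.1| ∧ |ξ.2 / ξ.1| < 1) →
      -- Σ_{j≥0} Σ_{|k|≤⌈2^{j/2}⌉} |ψ̂(2^{−j}ξ₁, k·2^{−j}ξ₁ + 2^{−j/2}ξ₂)|² = 1 :
      ∑' j : ℕ, ∑ k ∈ Finset.Icc (-⌈(2:ℝ) ^ ((j:ℝ)/2)⌉) ⌈(2:ℝ) ^ ((j:ℝ)/2)⌉,
        ‖fourier2 ψ ((2:ℝ) ^ (-(j:ℝ)) * ξ.1,
            (k : ℝ) * (2:ℝ) ^ (-(j:ℝ)) * ξ.1 + (2:ℝ) ^ (-(j:ℝ)/2) * ξ.2)‖ ^ 2 = 1 := by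
  -- bump condition off a null set
  have hb' : ∀ᵐ u : ℝ ∂volume, u ∈ Set.Icc (-1:ℝ) 1 →
      ∑ k ∈ Finset.Icc (-1 : ℤ) 1, ‖fourier1 ψ₂ (u + (k : ℝ))‖ ^ 2 = 1 :=
    (ae_restrict_iff' measurableSet_Icc).mp hbump
  set N₂ : Set ℝ := {u : ℝ | ¬ (u ∈ Set.Icc (-1:ℝ) 1 →
      ∑ k ∈ Finset.Icc (-1 : ℤ) 1, ‖fourier1 ψ₂ (u + (k : ℝ))‖ ^ 2 = 1)} with hN₂def
  have hN₂ : volume N₂ = 0 := ae_iff.mp hb'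
  set N : Set ℝ := ⋃ (j : ℕ), ⋃ (m : ℤ),
      (fun u : ℝ => (2:ℝ)^((j:ℝ)/2) * u + (-(m:ℝ))) ⁻¹' N₂ with hNdef
  have hN : volume N = 0 :=
    measure_iUnion_null fun j => measure_iUnion_null fun m =>
      aff_null (ne_of_gt (Real.rpow_pos_of_pos two_pos _)) _ hN₂
  have hBad2 : volume {ξ : ℝ × ℝ | ξ.1 ≠ 0 ∧ ξ.2 / ξ.1 ∈ N} = 0 := cone_null hN
  set N₁ : Set ℝ := {x : ℝ | ¬ ∑' j : ℤ, ‖fourier1 ψ₁ ((2:ℝ) ^ (-j) * x)‖ ^ 2 = 1} with hN₁def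
  have hN₁ : volume N₁ = 0 := ae_iff.mp hCald
  have hBad1 : volume {ξ : ℝ × ℝ | ξ.1 ∈ N₁} = 0 := fst_null hN₁
  filter_upwards [measure_eq_zero_iff_ae_notMem.mp hBad1, measure_eq_zero_iff_ae_notMem.mp hBad2]
    with ξ hb1 hb2 hcone
  obtain ⟨hx1, ht⟩ := hcone
  have hx0 : ξ.1 ≠ 0 := by
    intro h; rw [h, abs_zero] at hx1; linarith
  have hC : ∑' j : ℤ, ‖fourier1 ψ₁ ((2:ℝ) ^ (-j) * ξ.1)‖ ^ 2 = 1 := by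
    by_contra h; exact hb1 h
  have htN : ξ.2 / ξ.1 ∉ N := fun hmem => hb2 ⟨hx0, hmem⟩
  have hB : ∀ (j : ℕ) (m : ℤ),
      ((2:ℝ)^((j:ℝ)/2) * (ξ.2/ξ.1) - m) ∈ Set.Icc (-1:ℝ) 1 →
      ∑ k ∈ Finset.Icc (-1 : ℤ) 1,
        ‖fourier1 ψ₂ (((2:ℝ)^((j:ℝ)/2) * (ξ.2/ξ.1) - m) + (k : ℝ))‖ ^ 2 = 1 := by
    intro j m
    have hnot : (2:ℝ)^((j:ℝ)/2) * (ξ.2/ξ.1) + (-(m:ℝ)) ∉ N₂ := by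
      intro hmem
      exact htN (Set.mem_iUnion.mpr ⟨j, Set.mem_iUnion.mpr ⟨m, hmem⟩⟩)
    have := not_not.mp hnot
    rw [sub_eq_add_neg]
    exact this
  -- vanishing lemmas from support
  have hvan₂ : ∀ y : ℝ, 1 < |y| → fourier1 ψ₂ y = 0 := by
    intro y hy
    by_contra h
    have := hψ₂supp (Function.mem_support.mpr h)
    rw [Set.mem_Icc] at this
    have h1 : |y| ≤ 1 := abs_le.mpr this
    linarith
  have hvan₁ : ∀ y : ℝ, (5:ℝ)/4 < |y| → fourier1 ψ₁ y = 0 := by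
    intro y hy
    by_contra h
    have := hψ₁supp (Function.mem_support.mpr h)
    rcases this with h' | h' <;> rw [Set.mem_Icc] at h' <;>
      [skip; skip] <;>
      · have : |y| ≤ 5/4 := abs_le.mpr (by constructor <;> linarith [h'.1, h'.2])
        linarith
  -- the inner sum for each j
  have key : ∀ j : ℕ,
      (∑ k ∈ Finset.Icc (-⌈(2:ℝ) ^ ((j:ℝ)/2)⌉) ⌈(2:ℝ) ^ ((j:ℝ)/2)⌉,
        ‖fourier2 ψ ((2:ℝ) ^ (-(j:ℝ)) * ξ.1,
            (k : ℝ) * (2:ℝ) ^ (-(j:ℝ)) * ξ.1 + (2:ℝ) ^ (-(j:ℝ)/2) * ξ.2)‖ ^ 2)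
      = ‖fourier1 ψ₁ ((2:ℝ) ^ (-(j:ℝ)) * ξ.1)‖ ^ 2 := by
    intro j
    have ha : (0:ℝ) < (2:ℝ) ^ (-(j:ℝ)) := Real.rpow_pos_of_pos two_pos _
    have hax : (2:ℝ) ^ (-(j:ℝ)) * ξ.1 ≠ 0 := mul_ne_zero (ne_of_gt ha) hx0
    have hterm : ∀ k : ℤ,
        ‖fourier2 ψ ((2:ℝ) ^ (-(j:ℝ)) * ξ.1,
            (k : ℝ) * (2:ℝ) ^ (-(j:ℝ)) * ξ.1 + (2:ℝ) ^ (-(j:ℝ)/2) * ξ.2)‖ ^ 2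
        = ‖fourier1 ψ₁ ((2:ℝ) ^ (-(j:ℝ)) * ξ.1)‖ ^ 2
          * ‖fourier1 ψ₂ ((2:ℝ)^((j:ℝ)/2) * (ξ.2/ξ.1) + (k:ℝ))‖ ^ 2 := by
      intro k
      rw [hψdef]
      simp only [hax, if_false]
      have harg : ((k:ℝ) * (2:ℝ) ^ (-(j:ℝ)) * ξ.1 + (2:ℝ) ^ (-(j:ℝ)/2) * ξ.2)
          / ((2:ℝ) ^ (-(j:ℝ)) * ξ.1)
          = (2:ℝ)^((j:ℝ)/2) * (ξ.2/ξ.1) + (k:ℝ) := by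
        have hc : (2:ℝ) ^ (-(j:ℝ)/2) = (2:ℝ)^((j:ℝ)/2) * (2:ℝ) ^ (-(j:ℝ)) := by
          rw [← Real.rpow_add two_pos]; ring_nf
        rw [hc]
        field_simp
        ring
      rw [harg, norm_mul, mul_pow]
    rw [Finset.sum_congr rfl (fun k _ => hterm k), ← Finset.mul_sum]
    have hinner : ∑ k ∈ Finset.Icc (-⌈(2:ℝ) ^ ((j:ℝ)/2)⌉) ⌈(2:ℝ) ^ ((j:ℝ)/2)⌉,
        ‖fourier1 ψ₂ ((2:ℝ)^((j:ℝ)/2) * (ξ.2/ξ.1) + (k:ℝ))‖ ^ 2 = 1 := by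
      set s : ℝ := (2:ℝ)^((j:ℝ)/2) * (ξ.2/ξ.1) with hsdef
      set K : ℤ := ⌈(2:ℝ)^((j:ℝ)/2)⌉ with hKdef
      have h2jpos : (0:ℝ) < (2:ℝ)^((j:ℝ)/2) := Real.rpow_pos_of_pos two_pos _
      have h2j : (1:ℝ) ≤ (2:ℝ)^((j:ℝ)/2) := Real.one_le_rpow one_le_two (by positivity)
      have hsK : |s| < (K:ℝ) := by
        have h1 : |s| < (2:ℝ)^((j:ℝ)/2) := by
          rw [hsdef, abs_mul, abs_of_pos h2jpos]
          nlinarith [abs_nonneg (ξ.2/ξ.1), ht, h2jpos]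
        exact h1.trans_le (Int.le_ceil _)
      have hK1 : 1 ≤ K := by
        have : (1:ℝ) ≤ (K:ℝ) := h2j.trans (Int.le_ceil _)
        exact_mod_cast this
      set m : ℤ := round s with hmdef
      have hu : |s - (m:ℝ)| ≤ 1/2 := abs_sub_round s
      have hmK : -K ≤ m ∧ m ≤ K := by
        have h1 : |(m:ℝ)| ≤ |s| + |s - (m:ℝ)| := by
          have he : (m:ℝ) = s - (s - (m:ℝ)) := by ring
          calc |(m:ℝ)| = |s - (s - (m:ℝ))| := by rw [← he]
          _ ≤ |s| + |s - (m:ℝ)| := abs_sub _ _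
        have h2 : |(m:ℝ)| < (K:ℝ) + 1 := by linarith
        have h3 : |m| < K + 1 := by
          rw [← Int.cast_abs] at h2
          exact_mod_cast h2
        exact abs_le.mp (Int.lt_add_one_iff.mp h3)
      have hsltK : s < (K:ℝ) := (abs_lt.mp hsK).2
      have hsgtK : -(K:ℝ) < s := (abs_lt.mp hsK).1
      have huab := abs_le.mp hu
      -- vanishing for |n| ≥ 2
      have hvannk : ∀ n : ℤ, (n ≤ -2 ∨ 2 ≤ n) →
          ‖fourier1 ψ₂ ((s - (m:ℝ)) + (n:ℝ))‖ ^ 2 = 0 := by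
        intro n hn
        have h1 : 1 < |(s - (m:ℝ)) + (n:ℝ)| := by
          rcases hn with h | h
          · have hn' : (n:ℝ) ≤ -2 := by exact_mod_cast h
            rw [abs_of_neg (by linarith)]; linarith
          · have hn' : (2:ℝ) ≤ (n:ℝ) := by exact_mod_cast h
            rw [abs_of_pos (by linarith)]; linarith
        rw [hvan₂ _ h1, norm_zero]
        exact zero_pow (by norm_num)
      -- vanishing at the edges
      have hedge : ∀ n : ℤ, ((m = K ∧ n = -1) ∨ (m = -K ∧ n = 1)) →
          ‖fourier1 ψ₂ ((s - (m:ℝ)) + (n:ℝ))‖ ^ 2 = 0 := by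
        intro n hn
        have h1 : 1 < |(s - (m:ℝ)) + (n:ℝ)| := by
          rcases hn with ⟨hm, hn⟩ | ⟨hm, hn⟩
          · rw [hm, hn]
            push_cast
            rw [abs_of_neg (by linarith)]; linarith
          · rw [hm, hn]
            push_cast
            rw [abs_of_pos (by linarith)]; linarith
        rw [hvan₂ _ h1, norm_zero]
        exact zero_pow (by norm_num)
      -- reindex the sum
      have hre : ∑ k ∈ Finset.Icc (-K) K, ‖fourier1 ψ₂ (s + (k:ℝ))‖ ^ 2
          = ∑ n ∈ Finset.Icc (m - K) (m + K), ‖fourier1 ψ₂ ((s - (m:ℝ)) + (n:ℝ))‖ ^ 2 := by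
        rw [show m - K = m + (-K) by ring, ← Finset.map_add_left_Icc, Finset.sum_map]
        refine Finset.sum_congr rfl fun k _ => ?_
        have harg : (s - (m:ℝ)) + ((addLeftEmbedding m k : ℤ):ℝ) = s + (k:ℝ) := by
          simp only [addLeftEmbedding_apply]
          push_cast
          ring
        rw [harg]
      rw [hre]
      -- compare with the sum over Icc (-1) 1
      have hsub1 : Finset.Icc (m - K) (m + K) ⊆ Finset.Icc (-(2*K)) (2*K) := by
        intro n hn; simp only [Finset.mem_Icc] at *; omega
      have hsub2 : Finset.Icc (-1:ℤ) 1 ⊆ Finset.Icc (-(2*K)) (2*K) := by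
        intro n hn; simp only [Finset.mem_Icc] at *; omega
      have hz1 : ∀ n ∈ Finset.Icc (-(2*K)) (2*K), n ∉ Finset.Icc (m - K) (m + K) →
          ‖fourier1 ψ₂ ((s - (m:ℝ)) + (n:ℝ))‖ ^ 2 = 0 := by
        intro n hn hn'
        simp only [Finset.mem_Icc, not_and_or, not_le] at hn hn'
        rcases le_or_gt n (-2) with h | h
        · exact hvannk n (Or.inl h)
        rcases le_or_gt 2 n with h' | h'
        · exact hvannk n (Or.inr h')
        exact hedge n (by omega)
      have hz2 : ∀ n ∈ Finset.Icc (-(2*K)) (2*K), n ∉ Finset.Icc (-1:ℤ) 1 →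
          ‖fourier1 ψ₂ ((s - (m:ℝ)) + (n:ℝ))‖ ^ 2 = 0 := by
        intro n hn hn'
        simp only [Finset.mem_Icc, not_and_or, not_le] at hn hn'
        exact hvannk n (by omega)
      rw [Finset.sum_subset hsub1 hz1, ← Finset.sum_subset hsub2 hz2]
      have hfin := hB j m (Set.mem_Icc.mpr ⟨by linarith [huab.1], by linarith [huab.2]⟩)
      rw [← hsdef] at hfin
      exact hfin
    rw [hinner, mul_one]
  -- outer sum
  have hre2 : ∀ j : ℕ, ‖fourier1 ψ₁ ((2:ℝ) ^ (-(j:ℝ)) * ξ.1)‖ ^ 2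
      = ‖fourier1 ψ₁ ((2:ℝ) ^ (-((j:ℕ):ℤ)) * ξ.1)‖ ^ 2 := by
    intro j
    have hcast : ((-((j:ℕ):ℤ) : ℤ) : ℝ) = -(j:ℝ) := by push_cast; ring
    rw [← Real.rpow_intCast 2 (-((j:ℕ):ℤ)), hcast]
  have hsupp : Function.support (fun i : ℤ => ‖fourier1 ψ₁ ((2:ℝ) ^ (-i) * ξ.1)‖ ^ 2)
      ⊆ Set.range ((↑) : ℕ → ℤ) := by
    intro i hi
    rcases le_or_gt 0 i with h | h
    · exact ⟨i.toNat, Int.toNat_of_nonneg h⟩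
    · exfalso
      apply hi
      have h2 : (2:ℝ) ≤ (2:ℝ) ^ (-i) := by
        calc (2:ℝ) = (2:ℝ) ^ (1:ℤ) := (zpow_one 2).symm
        _ ≤ (2:ℝ) ^ (-i) := zpow_le_zpow_right₀ one_le_two (by omega)
      have h3 : (5:ℝ)/4 < |(2:ℝ) ^ (-i) * ξ.1| := by
        rw [abs_mul, abs_of_pos (zpow_pos two_pos _)]
        nlinarith
      show ‖fourier1 ψ₁ ((2:ℝ) ^ (-i) * ξ.1)‖ ^ 2 = 0
      rw [hvan₁ _ h3, norm_zero]
      exact zero_pow (by norm_num)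
  calc ∑' j : ℕ, ∑ k ∈ Finset.Icc (-⌈(2:ℝ) ^ ((j:ℝ)/2)⌉) ⌈(2:ℝ) ^ ((j:ℝ)/2)⌉,
        ‖fourier2 ψ ((2:ℝ) ^ (-(j:ℝ)) * ξ.1,
            (k : ℝ) * (2:ℝ) ^ (-(j:ℝ)) * ξ.1 + (2:ℝ) ^ (-(j:ℝ)/2) * ξ.2)‖ ^ 2
      = ∑' j : ℕ, ‖fourier1 ψ₁ ((2:ℝ) ^ (-((j:ℕ):ℤ)) * ξ.1)‖ ^ 2 :=
        tsum_congr fun j => (key j).trans (hre2 j)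
    _ = ∑' i : ℤ, ‖fourier1 ψ₁ ((2:ℝ) ^ (-i) * ξ.1)‖ ^ 2 :=
        Function.Injective.tsum_eq (Nat.cast_injective : Function.Injective ((↑) : ℕ → ℤ)) hsupp
    _ = 1 := hC
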